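/- Fix k ∈ ℕ and let y_k, x_k ∈ ℝⁿ. Suppose x'_{k+1} = y_k − η∇f(y_k) − η·g' where g' is a subgradient of h at x'_{k+1}, and x''_{k+1} = x_k − η∇f(x_k) − η·g'' where g'' is a subgradient of h at x''_{k+1}, with η = 1/L. Then: (i) F(x''_{k+1}) ≤ F(x_k), and (ii) F(x'_{k+1}) ≤ f(y_k) − η·⟨∇f(y_k), ∇f(y_k) + g'⟩ + (η/2)·‖∇f(y_k) + g'‖² + h(x'_{k+1}). -/

import Mathlib

/-!
The Lipschitz gradient gives the descent lemma
`f y ≤ f x + ⟪∇f x, y - x⟫ + L/2 ‖y - x‖²`. At the step `x - η d` with `η = 1/L`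
this becomes `f (x - η d) ≤ f x - η ⟪∇f x, d⟫ + η/2 ‖d‖²`, which is (ii). For (i), take
`d = ∇f x + g` with `g` a subgradient of `h` at the new point: the subgradient inequality
at `x` gives `h (x - η d) ≤ h x - η ⟪g, d⟫`, and adding the two bounds leaves
`F x - η/2 ‖d‖² ≤ F x`.
-/

open scoped RealInnerProductSpace

section

variable {E : Type*} [NormedAddCommGroup E] [InnerProductSpace ℝ E] [CompleteSpace E]
  {f : E → ℝ} {L : ℝ}

theorem hasDerivAt_comp_add_smul {x v : E} {t : ℝ} (hf : DifferentiableAt ℝ f (x + t • v)) :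
    HasDerivAt (fun s : ℝ => f (x + s • v)) ⟪gradient f (x + t • v), v⟫ t := by
  have hline : HasDerivAt (fun s : ℝ => x + s • v) v t := by
    simpa using ((hasDerivAt_id t).smul_const v).const_add x
  rw [inner_gradient_left]
  exact hf.hasFDerivAt.comp_hasDerivAt t hline

theorem inner_gradient_add_smul_le
    (hlip : ∀ x x' : E, ‖gradient f x - gradient f x'‖ ≤ L * ‖x - x'‖)
    (x v : E) {t : ℝ} (ht : 0 ≤ t) :
    ⟪gradient f (x + t • v), v⟫ ≤ ⟪gradient f x, v⟫ + L * ‖v‖ ^ 2 * t := by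
  have hgrad : ‖gradient f (x + t • v) - gradient f x‖ ≤ L * (t * ‖v‖) := by
    simpa [norm_smul, abs_of_nonneg ht] using hlip (x + t • v) x
  calc ⟪gradient f (x + t • v), v⟫
      = ⟪gradient f x, v⟫ + ⟪gradient f (x + t • v) - gradient f x, v⟫ := by
        rw [inner_sub_left]; ring
    _ ≤ ⟪gradient f x, v⟫ + ‖gradient f (x + t • v) - gradient f x‖ * ‖v‖ := by
        gcongr; exact real_inner_le_norm _ _
    _ ≤ ⟪gradient f x, v⟫ + L * (t * ‖v‖) * ‖v‖ := by gcongr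
    _ = ⟪gradient f x, v⟫ + L * ‖v‖ ^ 2 * t := by ring

theorem le_add_inner_gradient_add_sq_norm (hdiff : Differentiable ℝ f)
    (hlip : ∀ x x' : E, ‖gradient f x - gradient f x'‖ ≤ L * ‖x - x'‖) (x y : E) :
    f y ≤ f x + ⟪gradient f x, y - x⟫ + L / 2 * ‖y - x‖ ^ 2 := by
  set v := y - x
  set c := ⟪gradient f x, v⟫
  have hbound (t : ℝ) : HasDerivAt (fun t : ℝ => f x + c * t + L * ‖v‖ ^ 2 / 2 * t ^ 2)
      (c + L * ‖v‖ ^ 2 * t) t := by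
    refine ((((hasDerivAt_id t).const_mul c).const_add (f x)).add
      ((hasDerivAt_pow 2 t).const_mul (L * ‖v‖ ^ 2 / 2))).congr_deriv ?_
    ring
  have hfence : ∀ ⦃t : ℝ⦄, t ∈ Set.Icc (0 : ℝ) 1 →
      f (x + t • v) ≤ f x + c * t + L * ‖v‖ ^ 2 / 2 * t ^ 2 := by
    refine image_le_of_deriv_right_le_deriv_boundary
      (fun t _ ↦ (hasDerivAt_comp_add_smul (hdiff _)).continuousAt.continuousWithinAt)
      (fun t _ ↦ (hasDerivAt_comp_add_smul (hdiff _)).hasDerivWithinAt)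
      (by simp) (fun t _ ↦ (hbound t).continuousAt.continuousWithinAt)
      (fun t _ ↦ (hbound t).hasDerivWithinAt)
      (fun t ht ↦ inner_gradient_add_smul_le hlip x v ht.1)
  have hy := hfence (Set.right_mem_Icc.mpr zero_le_one)
  simp only [one_smul, v, add_sub_cancel, mul_one, one_pow] at hy
  linarith

theorem apply_sub_smul_le (hdiff : Differentiable ℝ f)
    (hlip : ∀ x x' : E, ‖gradient f x - gradient f x'‖ ≤ L * ‖x - x'‖) (hL : L ≠ 0)
    (x d : E) :
    f (x - (1 / L) • d) ≤ f x - 1 / L * ⟪gradient f x, d⟫ + 1 / L / 2 * ‖d‖ ^ 2 := by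
  have hdescent := le_add_inner_gradient_add_sq_norm hdiff hlip x (x - (1 / L) • d)
  rw [sub_sub_cancel_left, inner_neg_right, norm_neg, real_inner_smul_right, norm_smul,
    Real.norm_eq_abs, mul_pow, sq_abs] at hdescent
  convert hdescent using 2
  · ring
  · field_simp

theorem add_apply_sub_smul_le {h : E → ℝ} (hdiff : Differentiable ℝ f)
    (hlip : ∀ x x' : E, ‖gradient f x - gradient f x'‖ ≤ L * ‖x - x'‖) (hL : 0 < L)
    (x g : E) (hg : ∀ u, h (x - (1 / L) • (gradient f x + g)) +
      ⟪g, u - (x - (1 / L) • (gradient f x + g))⟫ ≤ h u) :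
    f (x - (1 / L) • (gradient f x + g)) + h (x - (1 / L) • (gradient f x + g)) ≤
      f x + h x := by
  set d := gradient f x + g
  have hf := apply_sub_smul_le hdiff hlip hL.ne' x d
  have hh := hg x
  rw [sub_sub_cancel, real_inner_smul_right] at hh
  have hd : ⟪gradient f x, d⟫ + ⟪g, d⟫ = ‖d‖ ^ 2 := by
    rw [← inner_add_left, real_inner_self_eq_norm_sq]
  calc f (x - (1 / L) • d) + h (x - (1 / L) • d)
      ≤ (f x - 1 / L * ⟪gradient f x, d⟫ + 1 / L / 2 * ‖d‖ ^ 2)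
          + (h x - 1 / L * ⟪g, d⟫) :=
        add_le_add hf (by linarith)
    _ = f x + h x - 1 / L / 2 * ‖d‖ ^ 2 := by rw [← hd]; ring
    _ ≤ f x + h x := sub_le_self _ (by positivity)

end

theorem nsa_stmt_16_general (n : ℕ)
    (f : EuclideanSpace ℝ (Fin n) → ℝ)
    (hdiff : Differentiable ℝ f)
    (L : ℝ) (hL : 0 < L)
    (hlip : ∀ x x' : EuclideanSpace ℝ (Fin n),
      ‖gradient f x - gradient f x'‖ ≤ L * ‖x - x'‖)
    (h : EuclideanSpace ℝ (Fin n) → ℝ)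
    (η : ℝ) (hη : η = 1 / L)
    (yk xk xp xpp gp gpp : EuclideanSpace ℝ (Fin n))
    (hxp : xp = yk - η • gradient f yk - η • gp)
    (hgp : ∀ u, h xp + ⟪gp, u - xp⟫ ≤ h u)
    (hxpp : xpp = xk - η • gradient f xk - η • gpp)
    (hgpp : ∀ u, h xpp + ⟪gpp, u - xpp⟫ ≤ h u) :
    f xpp + h xpp ≤ f xk + h xk ∧
    f xp + h xp ≤
      f yk - η * ⟪gradient f yk, gradient f yk + gp⟫
        + η / 2 * ‖gradient f yk + gp‖ ^ 2 + h xp := by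
  have hstep (x g : EuclideanSpace ℝ (Fin n)) :
      x - η • gradient f x - η • g = x - η • (gradient f x + g) := by
    rw [smul_add, sub_sub]
  subst hxp hxpp hη
  simp only [hstep] at hgp hgpp ⊢
  exact ⟨add_apply_sub_smul_le hdiff hlip hL xk gpp hgpp,
    by linarith [apply_sub_smul_le hdiff hlip hL.ne' yk (gradient f yk + gp)]⟩

/-- One-step descent properties of composite NSA with `η = 1/L`:
(i) the prox-gradient step from `x_k` does not increase `F = f + h`, and
(ii) the quadratic upper bound at the prox-gradient step from `y_k`. -/
theorem nsa_stmt_16 (n : ℕ) (hn : 1 ≤ n)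
    (f : EuclideanSpace ℝ (Fin n) → ℝ)
    (hconvf : ConvexOn ℝ Set.univ f)
    (hdiff : Differentiable ℝ f)
    (L : ℝ) (hL : 0 < L)
    (hlip : ∀ x x' : EuclideanSpace ℝ (Fin n),
      ‖gradient f x - gradient f x'‖ ≤ L * ‖x - x'‖)
    (h : EuclideanSpace ℝ (Fin n) → ℝ)
    (hconvh : ConvexOn ℝ Set.univ h)
    (η : ℝ) (hη : η = 1 / L)
    (yk xk xp xpp gp gpp : EuclideanSpace ℝ (Fin n))
    (hxp : xp = yk - η • gradient f yk - η • gp)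
    (hgp : ∀ u, h xp + ⟪gp, u - xp⟫ ≤ h u)
    (hxpp : xpp = xk - η • gradient f xk - η • gpp)
    (hgpp : ∀ u, h xpp + ⟪gpp, u - xpp⟫ ≤ h u) :
    f xpp + h xpp ≤ f xk + h xk ∧
    f xp + h xp ≤
      f yk - η * ⟪gradient f yk, gradient f yk + gp⟫
        + η / 2 * ‖gradient f yk + gp‖ ^ 2 + h xp :=
  nsa_stmt_16_general n f hdiff L hL hlip h η hη yk xk xp xpp gp gpp hxp hgp hxpp hgpp
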